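/- Let X be a real vector space of dimension at least 2 endowed with two norms ‖·‖₁ and ‖·‖₂, with associated functionals ρ*,₁ and ρ*,₂. The following conditions are equivalent: (i) ρ*,₁(x,y)/‖x‖₁⁴ = ρ*,₂(x,y)/‖x‖₂⁴ for all x ≠ 0 and all y; (ii) there exist m, M > 0 such that m·|ρ*,₁(x,y)| ≤ |ρ*,₂(x,y)| ≤ M·|ρ*,₁(x,y)| for all x,y; (iii) there exists M > 0 such that |ρ*,₂(x,y)| ≤ M·|ρ*,₁(x,y)| for all x,y; (iv) there exists m > 0 such that m·|ρ*,₁(x,y)| ≤ |ρ*,₂(x,y)| for all x,y; (v) there exist m, M ∈ ℝ such that m·ρ*,₁(x,y) ≤ ρ*,₂(x,y) ≤ M·ρ*,₁(x,y) for all x,y; (vi) there exists M > 0 such that |ρ*,₂(x,y)| = M·|ρ*,₁(x,y)| for all x,y; (vii) there exists M > 0 such that ρ*,₂(x,y) = M·ρ*,₁(x,y) for all x,y; (viii) there exists M > 0 such that ‖x‖₂ = M·‖x‖₁ for all x ∈ X. -/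

import Mathlib

open Filter Topology

/-- `N : X → ℝ` is a norm on the real vector space `X`. -/
def IsNorm {X : Type*} [AddCommGroup X] [Module ℝ X] (N : X → ℝ) : Prop :=
  (∀ x : X, N x = 0 ↔ x = 0) ∧
  (∀ (t : ℝ) (x : X), N (t • x) = |t| * N x) ∧
  (∀ x y : X, N (x + y) ≤ N x + N y)

/-- The norm derivative `ρ₊` computed with respect to the norm `N`. -/
noncomputable def rhoPlusN {X : Type*} [AddCommGroup X] [Module ℝ X] (N : X → ℝ)
    (x y : X) : ℝ :=
  limUnder (𝓝[>] (0 : ℝ)) (fun t : ℝ => (N (x + t • y) ^ 2 - N x ^ 2) / (2 * t))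

/-- The norm derivative `ρ₋` computed with respect to the norm `N`. -/
noncomputable def rhoMinusN {X : Type*} [AddCommGroup X] [Module ℝ X] (N : X → ℝ)
    (x y : X) : ℝ :=
  limUnder (𝓝[<] (0 : ℝ)) (fun t : ℝ => (N (x + t • y) ^ 2 - N x ^ 2) / (2 * t))

/-- `ρ*` computed with respect to the norm `N`. -/
noncomputable def rhoStarN {X : Type*} [AddCommGroup X] [Module ℝ X] (N : X → ℝ)
    (x y : X) : ℝ :=
  rhoMinusN N x y * rhoPlusN N x y

/-!
With `q t = N (x + t • y) ^ 2`, a convex function, `ρ₊(x, y)` is half the right derivative of `q`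
at `0` and `ρ₋(x, y) = -ρ₊(x, -y)`, so `ρ*(x, y) = -ρ₊(x, -y) ρ₊(x, y)`. Rescaling gives
`ρ₊(x, y + c x) = ρ₊(x, y) + c N(x)²`, so the zeros of `c ↦ ρ*(x, y + c x)` are
`-ρ₊(x, y) / N(x)²` and `ρ₊(x, -y) / N(x)²`. Each of (i)–(vii) forces every zero of `ρ*,₁` to be a
zero of `ρ*,₂` (or conversely), and with `ρ₋ ≤ ρ₊` this inclusion yields
`ρ₊,₁(x, y) / N₁(x)² ≤ ρ₊,₂(x, y) / N₂(x)²`: the right derivative of `N₂² / N₁²` along any line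
avoiding `0` is nonnegative, in both directions of the line. Hence `N₂ / N₁` is constant on such
lines, so on `X \ {0}` (dependent vectors are handled by homogeneity), which is (viii); conversely
(viii) multiplies `ρ*` by `M⁴`.
-/

open Set

namespace IsNorm

variable {X : Type*} [AddCommGroup X] [Module ℝ X] {N N₁ N₂ : X → ℝ}

theorem map_zero (hN : IsNorm N) : N 0 = 0 := (hN.1 0).2 rfl

theorem map_neg (hN : IsNorm N) (x : X) : N (-x) = N x := by
  simpa using hN.2.1 (-1) x

theorem nonneg (hN : IsNorm N) (x : X) : 0 ≤ N x := by
  have h := hN.2.2 x (-x)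
  rw [add_neg_cancel, hN.map_zero, hN.map_neg] at h
  linarith

theorem pos (hN : IsNorm N) {x : X} (hx : x ≠ 0) : 0 < N x :=
  (hN.nonneg x).lt_of_ne fun h => hx ((hN.1 x).1 h.symm)

theorem map_smul_of_nonneg (hN : IsNorm N) {t : ℝ} (ht : 0 ≤ t) (x : X) :
    N (t • x) = t * N x := by
  rw [hN.2.1, abs_of_nonneg ht]

theorem convexOn_line (hN : IsNorm N) (x y : X) :
    ConvexOn ℝ univ fun t : ℝ => N (x + t • y) := by
  refine ⟨convex_univ, fun s _ u _ a b ha hb hab => ?_⟩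
  have hcomb : x + (a • s + b • u) • y = a • (x + s • y) + b • (x + u • y) := by
    obtain rfl : b = 1 - a := by linarith
    module
  calc N (x + (a • s + b • u) • y) ≤ N (a • (x + s • y)) + N (b • (x + u • y)) :=
        hcomb ▸ hN.2.2 _ _
    _ = a • N (x + s • y) + b • N (x + u • y) := by
        rw [hN.map_smul_of_nonneg ha, hN.map_smul_of_nonneg hb, smul_eq_mul, smul_eq_mul]

theorem convexOn_sq_line (hN : IsNorm N) (x y : X) :
    ConvexOn ℝ univ fun t : ℝ => N (x + t • y) ^ 2 :=
  (hN.convexOn_line x y).pow (fun _ _ => hN.nonneg _) 2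

theorem continuous_sq_line (hN : IsNorm N) (x y : X) :
    Continuous fun t : ℝ => N (x + t • y) ^ 2 :=
  continuousOn_univ.1 ((hN.convexOn_sq_line x y).continuousOn isOpen_univ)

theorem tendsto_rhoPlusN (hN : IsNorm N) (x y : X) :
    Tendsto (fun t : ℝ => (N (x + t • y) ^ 2 - N x ^ 2) / (2 * t)) (𝓝[>] 0)
      (𝓝 (rhoPlusN N x y)) := by
  have hd := (hN.convexOn_sq_line x y).hasDerivWithinAt_rightDeriv_of_mem_interior
    (x := 0) (by simp)
  have hslope := ((hasDerivWithinAt_iff_tendsto_slope' self_notMem_Ioi).1 hd).div_const 2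
  refine tendsto_nhds_limUnder ⟨_, hslope.congr fun t => ?_⟩
  simp only [slope_def_field, zero_smul, add_zero, sub_zero]
  ring

theorem hasDerivWithinAt_sq_line_zero (hN : IsNorm N) (x y : X) :
    HasDerivWithinAt (fun t : ℝ => N (x + t • y) ^ 2) (2 * rhoPlusN N x y) (Ioi 0) 0 := by
  rw [hasDerivWithinAt_iff_tendsto_slope' self_notMem_Ioi]
  refine ((hN.tendsto_rhoPlusN x y).const_mul 2).congr' ?_
  filter_upwards [self_mem_nhdsWithin] with t (ht : 0 < t)
  simp only [slope_def_field, zero_smul, add_zero, sub_zero]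
  field_simp

theorem hasDerivWithinAt_sq_line (hN : IsNorm N) (x y : X) (t : ℝ) :
    HasDerivWithinAt (fun s : ℝ => N (x + s • y) ^ 2) (2 * rhoPlusN N (x + t • y) y) (Ioi t) t := by
  have h := (hN.hasDerivWithinAt_sq_line_zero (x + t • y) y).comp_of_eq t
    ((hasDerivAt_id' t).sub_const t).hasDerivWithinAt (fun s (hs : t < s) => sub_pos.2 hs)
    (sub_self t).symm
  have hfun : (fun s : ℝ => N (x + s • y) ^ 2)
      = (fun s : ℝ => N (x + t • y + s • y) ^ 2) ∘ fun s => s - t := by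
    funext s
    simp only [Function.comp, sub_smul]
    congr 2
    abel
  rwa [hfun, ← mul_one (2 * rhoPlusN N (x + t • y) y)]

theorem rhoPlusN_add_smul_self (hN : IsNorm N) (x y : X) (c : ℝ) :
    rhoPlusN N x (y + c • x) = rhoPlusN N x y + c * N x ^ 2 := by
  set V : Set ℝ := {t | 0 < 1 + t * c}
  have hV : V ∈ 𝓝 (0 : ℝ) :=
    (isOpen_lt continuous_const (by fun_prop)).mem_nhds (by simp)
  have hu : HasDerivAt (fun t : ℝ => t / (1 + t * c)) 1 0 := by
    refine ((hasDerivAt_id' (0 : ℝ)).fun_div (((hasDerivAt_id' (0 : ℝ)).mul_const c).const_add 1)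
      (by simp)).congr_deriv ?_
    simp
  have hw : HasDerivAt (fun t : ℝ => (1 + t * c) ^ 2) (2 * c) 0 := by
    refine ((((hasDerivAt_id' (0 : ℝ)).mul_const c).const_add 1).fun_pow 2).congr_deriv ?_
    simp
  have hmaps : MapsTo (fun t : ℝ => t / (1 + t * c)) (Ioi 0 ∩ V) (Ioi 0) :=
    fun t ht => div_pos ht.1 ht.2.out
  have hprod := (hasDerivWithinAt_inter hV).1 (hw.hasDerivWithinAt.mul
    ((hN.hasDerivWithinAt_sq_line_zero x y).comp_of_eq 0 hu.hasDerivWithinAt hmaps (by simp)))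
  have hrescale : ∀ t ∈ V, N (x + t • (y + c • x)) ^ 2
      = (1 + t * c) ^ 2 * N (x + (t / (1 + t * c)) • y) ^ 2 := by
    intro t (ht : 0 < 1 + t * c)
    have hvec : x + t • (y + c • x) = (1 + t * c) • (x + (t / (1 + t * c)) • y) := by
      match_scalars <;> field_simp
    rw [hvec, hN.map_smul_of_nonneg ht.le, mul_pow]
  have hshift := hprod.congr_of_eventuallyEq
    (eventually_nhdsWithin_of_eventually_nhds (Filter.mem_of_superset hV hrescale)) (by simp)
  have hderiv := (uniqueDiffWithinAt_Ioi 0).eq_deriv _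
    (hN.hasDerivWithinAt_sq_line_zero x (y + c • x)) hshift
  simp only [Function.comp_apply, zero_mul, add_zero, div_one, zero_smul, one_pow, mul_one,
    one_mul] at hderiv
  linarith

theorem rhoMinusN_eq_neg_rhoPlusN_neg (hN : IsNorm N) (x y : X) :
    rhoMinusN N x y = -rhoPlusN N x (-y) := by
  have h := ((hN.tendsto_rhoPlusN x (-y)).comp (neg_zero (G := ℝ) ▸ tendsto_neg_nhdsLT)).neg
  refine (h.congr fun t => ?_).limUnder_eq
  simp only [Function.comp, neg_smul_neg, mul_neg, div_neg, neg_neg]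

theorem rhoStarN_eq (hN : IsNorm N) (x y : X) :
    rhoStarN N x y = -(rhoPlusN N x (-y) * rhoPlusN N x y) := by
  rw [rhoStarN, hN.rhoMinusN_eq_neg_rhoPlusN_neg, neg_mul]

theorem rhoMinusN_le_rhoPlusN (hN : IsNorm N) (x y : X) :
    rhoMinusN N x y ≤ rhoPlusN N x y := by
  rw [hN.rhoMinusN_eq_neg_rhoPlusN_neg, neg_le_iff_add_nonneg']
  refine ge_of_tendsto ((hN.tendsto_rhoPlusN x (-y)).add (hN.tendsto_rhoPlusN x y)) ?_
  filter_upwards [self_mem_nhdsWithin] with t (ht : 0 < t)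
  have hmid : 2 * N x ≤ N (x + t • -y) + N (x + t • y) := by
    have h := hN.2.2 (x + t • -y) (x + t • y)
    rwa [show x + t • -y + (x + t • y) = (2 : ℝ) • x by module,
      hN.map_smul_of_nonneg zero_le_two] at h
  rw [← add_div]
  have hx := hN.nonneg x
  apply div_nonneg _ (by positivity)
  nlinarith [sq_nonneg (N (x + t • -y) - N (x + t • y))]

theorem rhoPlusN_of_eq_mul (h₁ : IsNorm N₁) {M : ℝ} (hM : ∀ x, N₂ x = M * N₁ x) (x y : X) :
    rhoPlusN N₂ x y = M ^ 2 * rhoPlusN N₁ x y := by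
  refine (((h₁.tendsto_rhoPlusN x y).const_mul (M ^ 2)).congr fun t => ?_).limUnder_eq
  simp only [hM]
  ring

theorem rhoStarN_of_eq_mul (h₁ : IsNorm N₁) (h₂ : IsNorm N₂) {M : ℝ}
    (hM : ∀ x, N₂ x = M * N₁ x) (x y : X) :
    rhoStarN N₂ x y = M ^ 4 * rhoStarN N₁ x y := by
  rw [h₂.rhoStarN_eq, h₁.rhoStarN_eq, rhoPlusN_of_eq_mul h₁ hM, rhoPlusN_of_eq_mul h₁ hM]
  ring

theorem rhoPlusN_div_sq_le (h₁ : IsNorm N₁) (h₂ : IsNorm N₂) {x : X} (hx : x ≠ 0)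
    (hz : ∀ y, rhoStarN N₁ x y = 0 → rhoStarN N₂ x y = 0) (y : X) :
    rhoPlusN N₁ x y / N₁ x ^ 2 ≤ rhoPlusN N₂ x y / N₂ x ^ 2 := by
  have hN₁ := pow_pos (h₁.pos hx) 2
  have hN₂ := pow_pos (h₂.pos hx) 2
  set c := -(rhoPlusN N₁ x y / N₁ x ^ 2) with hc
  have hplus₁ : rhoPlusN N₁ x (y + c • x) = 0 := by
    rw [h₁.rhoPlusN_add_smul_self, hc, neg_mul, div_mul_cancel₀ _ hN₁.ne', add_neg_cancel]
  have hstar₂ := hz (y + c • x) (by rw [h₁.rhoStarN_eq, hplus₁, mul_zero, neg_zero])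
  rw [h₂.rhoStarN_eq, show -(y + c • x) = -y + (-c) • x by module, h₂.rhoPlusN_add_smul_self,
    h₂.rhoPlusN_add_smul_self, neg_eq_zero, mul_eq_zero] at hstar₂
  rw [show rhoPlusN N₁ x y / N₁ x ^ 2 = -c by rw [hc, neg_neg], le_div_iff₀ hN₂]
  have hle := h₂.rhoMinusN_le_rhoPlusN x y
  rw [h₂.rhoMinusN_eq_neg_rhoPlusN_neg] at hle
  rcases hstar₂ with h | h <;> linarith

end IsNorm

theorem monotone_of_hasDerivWithinAt_Ioi_nonneg {f f' : ℝ → ℝ} (hf : Continuous f)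
    (hf' : ∀ t, HasDerivWithinAt f (f' t) (Ioi t) t) (hnonneg : ∀ t, 0 ≤ f' t) :
    Monotone f := fun a _ hab =>
  image_le_of_deriv_right_le_deriv_boundary (f := fun _ => f a) (f' := 0) continuousOn_const
    (fun t _ => hasDerivWithinAt_const t _ _) le_rfl hf.continuousOn
    (fun t _ => hasDerivWithinAt_Ioi_iff_Ici.1 (hf' t)) (fun t _ => hnonneg t)
    (right_mem_Icc.2 hab)


section TwoNorms

variable {X : Type*} [AddCommGroup X] [Module ℝ X] {N₁ N₂ : X → ℝ}

theorem monotone_sq_div_sq_line (h₁ : IsNorm N₁) (h₂ : IsNorm N₂)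
    (hz : ∀ x y : X, x ≠ 0 → rhoStarN N₁ x y = 0 → rhoStarN N₂ x y = 0) {x y : X}
    (hline : ∀ t : ℝ, x + t • y ≠ 0) :
    Monotone fun t : ℝ => N₂ (x + t • y) ^ 2 / N₁ (x + t • y) ^ 2 := by
  have hpos₁ : ∀ t : ℝ, 0 < N₁ (x + t • y) ^ 2 := fun t => pow_pos (h₁.pos (hline t)) 2
  have hpos₂ : ∀ t : ℝ, 0 < N₂ (x + t • y) ^ 2 := fun t => pow_pos (h₂.pos (hline t)) 2
  refine monotone_of_hasDerivWithinAt_Ioi_nonneg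
    ((h₂.continuous_sq_line x y).div (h₁.continuous_sq_line x y) fun t => (hpos₁ t).ne')
    (fun t => (h₂.hasDerivWithinAt_sq_line x y t).div (h₁.hasDerivWithinAt_sq_line x y t)
      (hpos₁ t).ne')
    fun t => div_nonneg ?_ (sq_nonneg _)
  have h := h₁.rhoPlusN_div_sq_le h₂ (hline t) (hz _ · (hline t)) y
  rw [div_le_div_iff₀ (hpos₁ t) (hpos₂ t)] at h
  linarith

theorem sq_div_sq_eq_of_linearIndependent (h₁ : IsNorm N₁) (h₂ : IsNorm N₂)
    (hz : ∀ x y : X, x ≠ 0 → rhoStarN N₁ x y = 0 → rhoStarN N₂ x y = 0) {u v : X}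
    (huv : LinearIndependent ℝ ![u, v]) :
    N₂ u ^ 2 / N₁ u ^ 2 = N₂ v ^ 2 / N₁ v ^ 2 := by
  have hline : ∀ t : ℝ, u + t • (v - u) ≠ 0 := fun t h => by
    obtain ⟨h1, h2⟩ := LinearIndependent.pair_iff.1 huv (1 - t) t (by rw [← h]; module)
    linarith
  have hmono := monotone_sq_div_sq_line h₁ h₂ hz hline
  have hanti := monotone_sq_div_sq_line h₁ h₂ hz (y := -(v - u)) fun t => by
    rw [smul_neg, ← neg_smul]
    exact hline (-t)
  have h01 := hmono zero_le_one
  have h10 := hanti (neg_nonpos.2 zero_le_one)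
  dsimp only at h01 h10
  rw [zero_smul, add_zero, show u + (1 : ℝ) • (v - u) = v by module] at h01
  rw [zero_smul, add_zero, show u + (-1 : ℝ) • -(v - u) = v by module] at h10
  exact le_antisymm h01 h10

theorem div_eq_div_of_rhoStarN_eq_zero (h₁ : IsNorm N₁) (h₂ : IsNorm N₂)
    (hz : ∀ x y : X, x ≠ 0 → rhoStarN N₁ x y = 0 → rhoStarN N₂ x y = 0) {u v : X}
    (hu : u ≠ 0) (hv : v ≠ 0) :
    N₂ u / N₁ u = N₂ v / N₁ v := by
  by_cases huv : LinearIndependent ℝ ![u, v]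
  · rw [← pow_left_inj₀ (div_nonneg (h₂.nonneg u) (h₁.nonneg u))
      (div_nonneg (h₂.nonneg v) (h₁.nonneg v)) two_ne_zero, div_pow, div_pow]
    exact sq_div_sq_eq_of_linearIndependent h₁ h₂ hz huv
  · obtain ⟨a, rfl⟩ : ∃ a : ℝ, a • u = v := by simpa [LinearIndependent.pair_iff' hu] using huv
    have ha : |a| ≠ 0 := abs_ne_zero.2 fun h => hv (by rw [h, zero_smul])
    rw [h₁.2.1, h₂.2.1, mul_div_mul_left _ _ ha]

theorem exists_eq_mul_of_rhoStarN_eq_zero (h₁ : IsNorm N₁) (h₂ : IsNorm N₂)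
    (hz : ∀ x y : X, x ≠ 0 → rhoStarN N₁ x y = 0 → rhoStarN N₂ x y = 0) :
    ∃ M : ℝ, 0 < M ∧ ∀ x, N₂ x = M * N₁ x := by
  have hzero : ∀ M : ℝ, N₂ 0 = M * N₁ 0 := fun M => by rw [h₁.map_zero, h₂.map_zero, mul_zero]
  rcases subsingleton_or_nontrivial X with hX | hX
  · exact ⟨1, one_pos, fun x => Subsingleton.elim x 0 ▸ hzero 1⟩
  obtain ⟨e, he⟩ := exists_ne (0 : X)
  refine ⟨N₂ e / N₁ e, div_pos (h₂.pos he) (h₁.pos he), fun x => ?_⟩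
  rcases eq_or_ne x 0 with rfl | hx
  · exact hzero _
  · rw [div_eq_div_of_rhoStarN_eq_zero h₁ h₂ hz he hx, div_mul_cancel₀ _ (h₁.pos hx).ne']

end TwoNorms

theorem rhoStar_two_norms_tfae_general {X : Type*} [AddCommGroup X] [Module ℝ X]
    (N₁ N₂ : X → ℝ) (h₁ : IsNorm N₁) (h₂ : IsNorm N₂) :
    List.TFAE
      [ ∀ x y : X, x ≠ 0 →
          rhoStarN N₁ x y / N₁ x ^ 4 = rhoStarN N₂ x y / N₂ x ^ 4,
        ∃ m M : ℝ, 0 < m ∧ 0 < M ∧ ∀ x y : X,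
          m * |rhoStarN N₁ x y| ≤ |rhoStarN N₂ x y| ∧
          |rhoStarN N₂ x y| ≤ M * |rhoStarN N₁ x y|,
        ∃ M : ℝ, 0 < M ∧ ∀ x y : X, |rhoStarN N₂ x y| ≤ M * |rhoStarN N₁ x y|,
        ∃ m : ℝ, 0 < m ∧ ∀ x y : X, m * |rhoStarN N₁ x y| ≤ |rhoStarN N₂ x y|,
        ∃ m M : ℝ, ∀ x y : X,
          m * rhoStarN N₁ x y ≤ rhoStarN N₂ x y ∧
          rhoStarN N₂ x y ≤ M * rhoStarN N₁ x y,
        ∃ M : ℝ, 0 < M ∧ ∀ x y : X, |rhoStarN N₂ x y| = M * |rhoStarN N₁ x y|,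
        ∃ M : ℝ, 0 < M ∧ ∀ x y : X, rhoStarN N₂ x y = M * rhoStarN N₁ x y,
        ∃ M : ℝ, 0 < M ∧ ∀ x : X, N₂ x = M * N₁ x ] := by
  tfae_have 8 → 7 := fun ⟨M, hM, h⟩ => ⟨M ^ 4, by positivity, h₁.rhoStarN_of_eq_mul h₂ h⟩
  tfae_have 7 → 6 := fun ⟨M, hM, h⟩ => ⟨M, hM, fun x y => by rw [h, abs_mul, abs_of_pos hM]⟩
  tfae_have 6 → 3 := fun ⟨M, hM, h⟩ => ⟨M, hM, fun x y => (h x y).le⟩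
  tfae_have 3 → 8 := fun ⟨M, _, h⟩ => exists_eq_mul_of_rhoStarN_eq_zero h₁ h₂ fun x y _ h0 =>
    abs_nonpos_iff.1 (by simpa [h0] using h x y)
  tfae_have 8 → 2 := fun ⟨M, hM, h⟩ => ⟨M ^ 4, M ^ 4, by positivity, by positivity, fun x y => by
    rw [h₁.rhoStarN_of_eq_mul h₂ h, abs_mul, abs_of_pos (pow_pos hM 4)]
    exact ⟨le_rfl, le_rfl⟩⟩
  tfae_have 2 → 4 := fun ⟨m, _, hm, _, h⟩ => ⟨m, hm, fun x y => (h x y).1⟩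
  tfae_have 4 → 8 := fun ⟨m, hm, h⟩ => by
    obtain ⟨M, hM, hM'⟩ := exists_eq_mul_of_rhoStarN_eq_zero h₂ h₁ fun x y _ h0 =>
      abs_nonpos_iff.1 (nonpos_of_mul_nonpos_right (by simpa [h0] using h x y) hm)
    exact ⟨M⁻¹, inv_pos.2 hM, fun x => by rw [hM' x, inv_mul_cancel_left₀ hM.ne']⟩
  tfae_have 8 → 5 := fun ⟨M, _, h⟩ => ⟨M ^ 4, M ^ 4, fun x y => by
    rw [h₁.rhoStarN_of_eq_mul h₂ h]
    exact ⟨le_rfl, le_rfl⟩⟩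
  tfae_have 5 → 8 := fun ⟨m, M, h⟩ => exists_eq_mul_of_rhoStarN_eq_zero h₁ h₂ fun x y _ h0 => by
    have hxy := h x y
    rw [h0, mul_zero, mul_zero] at hxy
    exact le_antisymm hxy.2 hxy.1
  tfae_have 8 → 1 := fun ⟨M, hM, h⟩ x y _ => by
    rw [h₁.rhoStarN_of_eq_mul h₂ h, h x, mul_pow, mul_div_mul_left _ _ (by positivity)]
  tfae_have 1 → 8 := fun h => exists_eq_mul_of_rhoStarN_eq_zero h₁ h₂ fun x y hx h0 => by
    simpa [h0, (h₂.pos hx).ne'] using (h x y hx).symm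
  tfae_finish

theorem rhoStar_two_norms_tfae {X : Type*} [AddCommGroup X] [Module ℝ X]
    (hdim : 2 ≤ Module.rank ℝ X) (N₁ N₂ : X → ℝ) (h₁ : IsNorm N₁) (h₂ : IsNorm N₂) :
    List.TFAE
      [ ∀ x y : X, x ≠ 0 →
          rhoStarN N₁ x y / N₁ x ^ 4 = rhoStarN N₂ x y / N₂ x ^ 4,
        ∃ m M : ℝ, 0 < m ∧ 0 < M ∧ ∀ x y : X,
          m * |rhoStarN N₁ x y| ≤ |rhoStarN N₂ x y| ∧
          |rhoStarN N₂ x y| ≤ M * |rhoStarN N₁ x y|,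
        ∃ M : ℝ, 0 < M ∧ ∀ x y : X, |rhoStarN N₂ x y| ≤ M * |rhoStarN N₁ x y|,
        ∃ m : ℝ, 0 < m ∧ ∀ x y : X, m * |rhoStarN N₁ x y| ≤ |rhoStarN N₂ x y|,
        ∃ m M : ℝ, ∀ x y : X,
          m * rhoStarN N₁ x y ≤ rhoStarN N₂ x y ∧
          rhoStarN N₂ x y ≤ M * rhoStarN N₁ x y,
        ∃ M : ℝ, 0 < M ∧ ∀ x y : X, |rhoStarN N₂ x y| = M * |rhoStarN N₁ x y|,
        ∃ M : ℝ, 0 < M ∧ ∀ x y : X, rhoStarN N₂ x y = M * rhoStarN N₁ x y,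
        ∃ M : ℝ, 0 < M ∧ ∀ x : X, N₂ x = M * N₁ x ] :=
  rhoStar_two_norms_tfae_general N₁ N₂ h₁ h₂
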